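/- arXiv:2304.09815 — 2 statements merged into one kernel-verified Lean document; each statement's English description precedes it below -/
import Mathlib

section
/- Fix 0 < a < 1 and for n ≥ 1 set I_a(n) = (1/2)·((1−a)/(1+a))^{n(1−a)/(2a)}·( ((1−a)/(1+a))^n − 1 ). Then for every n ≥ 1: (i) the n-th derivative of w ↦ sinh(a·w)·e^w vanishes at w = n·M_a, i.e. (∂ⁿ/∂wⁿ) f(a,w) = 0 at w = n·M_a; (ii) f(a, n·M_a) = I_a(n); consequently (iii) ψ₋₁(a, I_a(n)) = n·M_a. -/
/-- `f(a,w) = sinh(a·w)·e^w`. -/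
noncomputable def fab (a w : ℝ) : ℝ := Real.sinh (a * w) * Real.exp w

/-- `M_a = (1/(2a))·log((1−a)/(1+a))`. -/
noncomputable def Ma (a : ℝ) : ℝ := (1 / (2 * a)) * Real.log ((1 - a) / (1 + a))

/-- `L_a = −(a/√(1−a²))·((1−a)/(1+a))^{1/(2a)}`, the minimum value of `f(a,·)`. -/
noncomputable def La (a : ℝ) : ℝ :=
  -(a / Real.sqrt (1 - a ^ 2)) * ((1 - a) / (1 + a)) ^ (1 / (2 * a))

/-- `I_a(n) = (1/2)·((1−a)/(1+a))^{n(1−a)/(2a)}·(((1−a)/(1+a))^n − 1)`. -/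
noncomputable def Ia (a : ℝ) (n : ℕ) : ℝ :=
  (1 / 2) * ((1 - a) / (1 + a)) ^ ((n : ℝ) * (1 - a) / (2 * a)) *
    (((1 - a) / (1 + a)) ^ n - 1)


/-!
Since `f(a,w) = (e^{(1+a)w} - e^{(1-a)w})/2`, its `n`-th derivative is
`e^{(1-a)w}/2 · ((1+a)^n e^{2aw} - (1-a)^n)`, and `e^{2a·M_a} = (1-a)/(1+a)`. Hence it vanishes at
`w = n·M_a`; its case `n = 0` evaluates `f(a, n·M_a)` as `I_a(n)`, and its case `n = 1` shows that
`f(a,·)` is strictly decreasing on `(-∞, M_a]`. As `n·M_a ≤ M_a` and `f(a, n·M_a) < 0`, the value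
`I_a(n)` lies in `[L_a, 0)`, and injectivity of `f(a,·)` on `(-∞, M_a]` gives `ψ₋₁(a, I_a(n)) = n·M_a`.
-/

open Real Set

lemma fab_eq_exp_sub_exp (a : ℝ) :
    fab a = fun w => (exp ((1 + a) * w) - exp ((1 - a) * w)) / 2 := by
  funext w
  rw [fab, sinh_eq, div_mul_eq_mul_div, sub_mul, ← exp_add, ← exp_add]
  ring_nf

lemma iteratedDeriv_fab (a w : ℝ) (n : ℕ) :
    iteratedDeriv n (fab a) w =
      exp ((1 - a) * w) / 2 * ((1 + a) ^ n * exp (2 * a * w) - (1 - a) ^ n) := by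
  rw [fab_eq_exp_sub_exp, iteratedDeriv_div_const,
    iteratedDeriv_fun_sub (by fun_prop) (by fun_prop)]
  simp only [iteratedDeriv_exp_const_mul]
  rw [show (1 + a) * w = (1 - a) * w + 2 * a * w by ring, exp_add]
  ring

lemma exp_two_mul_mul_Ma {a : ℝ} (ha0 : 0 < a) (ha1 : a < 1) :
    exp (2 * a * Ma a) = (1 - a) / (1 + a) := by
  rw [Ma, ← mul_assoc, mul_one_div_cancel (by positivity), one_mul,
    exp_log (div_pos (by linarith) (by linarith))]

lemma Ma_neg {a : ℝ} (ha0 : 0 < a) (ha1 : a < 1) : Ma a < 0 :=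
  mul_neg_of_pos_of_neg (by positivity)
    (log_neg (div_pos (by linarith) (by linarith)) ((div_lt_one (by linarith)).2 (by linarith)))

lemma exp_two_mul_mul_nat_mul_Ma {a : ℝ} (ha0 : 0 < a) (ha1 : a < 1) (n : ℕ) :
    exp (2 * a * (n * Ma a)) = ((1 - a) / (1 + a)) ^ n := by
  rw [mul_left_comm, exp_nat_mul, exp_two_mul_mul_Ma ha0 ha1]

lemma iteratedDeriv_fab_nat_mul_Ma {a : ℝ} (ha0 : 0 < a) (ha1 : a < 1) (n : ℕ) :
    iteratedDeriv n (fab a) (n * Ma a) = 0 := by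
  rw [iteratedDeriv_fab, exp_two_mul_mul_nat_mul_Ma ha0 ha1, ← mul_pow,
    mul_div_cancel₀ _ (by linarith), sub_self, mul_zero]

lemma fab_nat_mul_Ma {a : ℝ} (ha0 : 0 < a) (ha1 : a < 1) (n : ℕ) :
    fab a (n * Ma a) = Ia a n := by
  have hr : 0 < (1 - a) / (1 + a) := div_pos (by linarith) (by linarith)
  have hrpow :
      ((1 - a) / (1 + a)) ^ ((n : ℝ) * (1 - a) / (2 * a)) = exp ((1 - a) * (n * Ma a)) := by
    rw [rpow_def_of_pos hr, Ma]
    ring_nf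
  rw [← iteratedDeriv_zero (f := fab a), iteratedDeriv_fab, exp_two_mul_mul_nat_mul_Ma ha0 ha1,
    Ia, hrpow]
  ring

lemma fab_neg {a w : ℝ} (ha : 0 < a) (hw : w < 0) : fab a w < 0 :=
  mul_neg_of_neg_of_pos (sinh_neg_iff.2 (mul_neg_of_pos_of_neg ha hw)) (exp_pos w)

lemma strictAntiOn_fab {a : ℝ} (ha0 : 0 < a) (ha1 : a < 1) :
    StrictAntiOn (fab a) (Iic (Ma a)) := by
  refine strictAntiOn_of_deriv_neg (convex_Iic _) ?_ fun w hw => ?_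
  · rw [fab_eq_exp_sub_exp]; fun_prop
  rw [interior_Iic, mem_Iio] at hw
  have hexp : exp (2 * a * w) < (1 - a) / (1 + a) := by
    rw [← exp_two_mul_mul_Ma ha0 ha1, exp_lt_exp]
    nlinarith
  rw [← iteratedDeriv_one, iteratedDeriv_fab, pow_one, pow_one]
  refine mul_neg_of_pos_of_neg (by positivity) ?_
  rw [lt_div_iff₀ (by linarith)] at hexp
  linarith

lemma sinh_mul_Ma {a : ℝ} (ha0 : 0 < a) (ha1 : a < 1) :
    sinh (a * Ma a) = -(a / sqrt (1 - a ^ 2)) := by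
  have hp : 0 < 1 - a := by linarith
  have hq : 0 < 1 + a := by linarith
  have hsq : exp (a * Ma a) = sqrt (1 - a) / sqrt (1 + a) := by
    rw [← sqrt_div hp.le, ← exp_two_mul_mul_Ma ha0 ha1, ← sqrt_sq (exp_pos _).le, ← exp_nat_mul]
    push_cast
    ring_nf
  rw [sinh_eq, exp_neg, hsq, show 1 - a ^ 2 = (1 - a) * (1 + a) by ring, sqrt_mul hp.le]
  have hp0 := sqrt_pos.2 hp
  have hq0 := sqrt_pos.2 hq
  field_simp
  rw [sq_sqrt hp.le, sq_sqrt hq.le]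
  ring

lemma fab_Ma {a : ℝ} (ha0 : 0 < a) (ha1 : a < 1) : fab a (Ma a) = La a := by
  have hr : 0 < (1 - a) / (1 + a) := div_pos (by linarith) (by linarith)
  have hrpow : ((1 - a) / (1 + a)) ^ (1 / (2 * a)) = exp (Ma a) := by
    rw [rpow_def_of_pos hr, Ma, mul_comm]
  rw [fab, La, sinh_mul_Ma ha0 ha1, hrpow]

/-- For `n ≥ 1`: the `n`-th derivative of `f(a,·)` vanishes at `n·M_a`,
`f(a, n·M_a) = I_a(n)`, and consequently `ψ₋₁(a, I_a(n)) = n·M_a`. -/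
theorem stmt_11 (a : ℝ) (ha0 : 0 < a) (ha1 : a < 1) (psi1 : ℝ → ℝ)
    (hpsi1 : ∀ x, La a ≤ x → x < 0 → psi1 x ≤ Ma a ∧ fab a (psi1 x) = x) :
    ∀ n : ℕ, 1 ≤ n →
      iteratedDeriv n (fun w : ℝ => Real.sinh (a * w) * Real.exp w) ((n : ℝ) * Ma a) = 0 ∧
      fab a ((n : ℝ) * Ma a) = Ia a n ∧
      psi1 (Ia a n) = (n : ℝ) * Ma a := by
  intro n hn
  have hMa := Ma_neg ha0 ha1
  have hnMa : (n : ℝ) * Ma a ≤ Ma a := by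
    nlinarith [show (1 : ℝ) ≤ n by exact_mod_cast hn]
  have hval := fab_nat_mul_Ma ha0 ha1 n
  have hanti := strictAntiOn_fab ha0 ha1
  refine ⟨iteratedDeriv_fab_nat_mul_Ma ha0 ha1 n, hval, ?_⟩
  have hLa : La a ≤ Ia a n := by
    rw [← fab_Ma ha0 ha1, ← hval]
    exact hanti.antitoneOn hnMa self_mem_Iic hnMa
  have hIa : Ia a n < 0 := hval ▸ fab_neg ha0 (by linarith)
  obtain ⟨hpsi_le, hpsi_eq⟩ := hpsi1 _ hLa hIa
  exact hanti.injOn hpsi_le hnMa (hpsi_eq.trans hval.symm)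
end

section
/- Fix 0 < a < 1 with a ≠ 1/3, and let x ≥ (1/2)·(1 + 1/(e^{|1/3 − a|} − 1))^{(1+a)/(2a)}. Then: (1) if 0 < a < 1/3, (1/(1+a))·(2x)^{−2a/(1+a)} + log(2x)/(1+a) ≤ ψ₀(a,x) ≤ log(2x)/(1+a) + (2/(1+a))·(2x)^{−2a/(1+a)}; (2) if 1/3 < a < 1, (1/(3(1+a)))·(2x)^{−2a/(1+a)} + log(2x)/(1+a) ≤ ψ₀(a,x) ≤ log(2x)/(1+a) + (1/(1+a))·(2x)^{−2a/(1+a)}. -/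
/-! Since `sinh (a w) e^w = (e^{(1+a)w} - e^{(1-a)w}) / 2`, substituting `w = (log (2x) + u) / (1+a)`
gives `f(a,w) = x (e^u - y e^{cu})` with `y = (2x)^{-2a/(1+a)}` and `c = (1-a)/(1+a)`. As `f(a,·)`
increases beyond `M_a`, each bound on `ψ₀(a,x)` reduces to comparing `e^u - 1` with `y e^{cu}`, at
`u = y, 2y` when `a < 1/3` and at `u = y/3, y` when `a > 1/3`. Both comparisons hinge on whether
`c` exceeds `1/2`, i.e. on the sign of `1/3 - a`, and the hypothesis on `x` makes
`y ≤ 1 - e^{-|1/3-a|} ≤ |1/3 - a|`, small enough for the second-order terms. -/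

open Real Set

namespace Real

lemma mul_exp_half_le_exp_sub_one {y : ℝ} (hy : 0 ≤ y) : y * exp (y / 2) ≤ exp y - 1 := by
  have hsinh : y / 2 ≤ sinh (y / 2) := self_le_sinh_iff.2 (by positivity)
  have hexp : exp y - 1 = 2 * sinh (y / 2) * exp (y / 2) := by
    have hsq : exp y = exp (y / 2) * exp (y / 2) := by rw [← exp_add, add_halves]
    rw [sinh_eq, exp_neg, hsq]
    field_simp
  rw [hexp]
  nlinarith [exp_pos (y / 2)]

lemma mul_exp_mul_le_exp_sub_one {y c : ℝ} (hy : 0 ≤ y) (hc : c ≤ 1 / 2) :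
    y * exp (c * y) ≤ exp y - 1 :=
  calc y * exp (c * y) ≤ y * exp (y / 2) := by gcongr; nlinarith
    _ ≤ exp y - 1 := mul_exp_half_le_exp_sub_one hy

lemma mul_exp_mul_two_mul_le_exp_two_mul_sub_one {y c : ℝ} (hy : 0 ≤ y)
    (hc : (2 * c - 1) * y ≤ log 2) : y * exp (c * (2 * y)) ≤ exp (2 * y) - 1 :=
  calc y * exp (c * (2 * y)) ≤ y * exp (log 2 + y) := by gcongr; linarith
    _ = 2 * y * exp (2 * y / 2) := by rw [exp_add, exp_log two_pos]; ring_nf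
    _ ≤ exp (2 * y) - 1 := mul_exp_half_le_exp_sub_one (by positivity)

lemma exp_sub_one_le_mul_exp_mul {y c : ℝ} (hy0 : 0 ≤ y) (hy1 : y ≤ 1)
    (hc : 1 / 2 + 2 / 9 * y ≤ c) : exp y - 1 ≤ y * exp (c * y) := by
  have hcubic : exp y ≤ 1 + y + y ^ 2 / 2 + 2 / 9 * y ^ 3 := by
    have h := exp_bound' hy0 hy1 (n := 3) (by norm_num)
    norm_num [Finset.sum_range_succ, Nat.factorial] at h
    linarith
  have hlin : 1 + c * y ≤ exp (c * y) := by linarith [add_one_le_exp (c * y)]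
  nlinarith [mul_le_mul_of_nonneg_left hlin hy0]

lemma exp_div_three_sub_one_le_mul_exp_mul {y c : ℝ} (hy0 : 0 ≤ y) (hy1 : y ≤ 1)
    (hc : 0 ≤ c) : exp (y / 3) - 1 ≤ y * exp (c * (y / 3)) := by
  have h := abs_exp_sub_one_le (x := y / 3) (by rw [abs_of_nonneg (by positivity)]; linarith)
  rw [abs_of_nonneg (by positivity : 0 ≤ y / 3)] at h
  have h1 : 1 ≤ exp (c * (y / 3)) := one_le_exp (by positivity)
  nlinarith [(abs_le.1 h).2]

lemma inv_one_add_one_div_exp_sub_one_le {δ : ℝ} (hδ : 0 < δ) :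
    (1 + 1 / (exp δ - 1))⁻¹ ≤ δ := by
  have h1 : 0 < exp δ - 1 := by linarith [add_one_lt_exp hδ.ne']
  have hinv : (1 + 1 / (exp δ - 1))⁻¹ = 1 - exp (-δ) := by
    rw [exp_neg]
    field_simp
    ring
  linarith [hinv, add_one_le_exp (-δ)]

end Real

lemma fab_eq (a w : ℝ) : fab a w = (exp ((1 + a) * w) - exp ((1 - a) * w)) / 2 := by
  rw [fab, sinh_eq, div_mul_eq_mul_div, sub_mul, ← exp_add, ← exp_add]
  ring_nf

lemma hasDerivAt_fab (a w : ℝ) :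
    HasDerivAt (fab a) (((1 + a) * exp ((1 + a) * w) - (1 - a) * exp ((1 - a) * w)) / 2) w := by
  rw [funext (fab_eq a)]
  have h₁ := ((hasDerivAt_id' w).const_mul (1 + a)).exp
  have h₂ := ((hasDerivAt_id' w).const_mul (1 - a)).exp
  exact ((h₁.sub h₂).div_const 2).congr_deriv (by ring)

lemma Ma_nonpos {a : ℝ} (ha0 : 0 < a) (ha1 : a < 1) : Ma a ≤ 0 :=
  mul_nonpos_of_nonneg_of_nonpos (by positivity)
    (log_nonpos (by bound) ((div_le_one (by linarith)).2 (by linarith)))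

lemma La_nonpos {a : ℝ} (ha0 : 0 < a) (ha1 : a < 1) : La a ≤ 0 :=
  mul_nonpos_of_nonpos_of_nonneg (neg_nonpos.2 (by positivity))
    (rpow_nonneg (div_nonneg (by linarith) (by linarith)) _)

lemma fab_strictMonoOn {a : ℝ} (ha0 : 0 < a) (ha1 : a < 1) :
    StrictMonoOn (fab a) (Ici (Ma a)) := by
  refine strictMonoOn_of_deriv_pos (convex_Ici _)
    (fun w _ => (hasDerivAt_fab a w).continuousAt.continuousWithinAt) fun w hw => ?_
  rw [interior_Ici, mem_Ioi] at hw
  rw [(hasDerivAt_fab a w).deriv]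
  have h1a : 0 < 1 + a := by linarith
  have hlog : log ((1 - a) / (1 + a)) < 2 * a * w := by
    rw [Ma, div_mul_eq_mul_div, one_mul, div_lt_iff₀ (by positivity)] at hw
    linarith
  have hratio : 1 - a < (1 + a) * exp (2 * a * w) := by
    rw [← div_lt_iff₀' h1a]
    exact (log_lt_iff_lt_exp (div_pos (by linarith) h1a)).1 hlog
  have hsplit : exp ((1 + a) * w) = exp (2 * a * w) * exp ((1 - a) * w) := by
    rw [← exp_add]; ring_nf
  rw [hsplit]
  nlinarith [exp_pos ((1 - a) * w)]

lemma fab_log_add_div (a x u : ℝ) (ha : 1 + a ≠ 0) (hx : 0 < x) :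
    fab a ((log (2 * x) + u) / (1 + a)) =
      x * (exp u - (2 * x) ^ (-(2 * a) / (1 + a)) * exp ((1 - a) / (1 + a) * u)) := by
  have h2x : 0 < 2 * x := by positivity
  have hplus : exp ((1 + a) * ((log (2 * x) + u) / (1 + a))) = 2 * x * exp u := by
    rw [mul_div_cancel₀ _ ha, exp_add, exp_log h2x]
  have hminus : exp ((1 - a) * ((log (2 * x) + u) / (1 + a))) =
      2 * x * (2 * x) ^ (-(2 * a) / (1 + a)) * exp ((1 - a) / (1 + a) * u) := by
    rw [show (1 - a) * ((log (2 * x) + u) / (1 + a)) =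
        log (2 * x) * (1 + -(2 * a) / (1 + a)) + (1 - a) / (1 + a) * u by field_simp; ring,
      exp_add, ← rpow_def_of_pos h2x, rpow_add h2x, rpow_one]
  rw [fab_eq, hplus, hminus]
  ring

/-- Two-sided asymptotic bounds for `ψ₀(a,x)` when
`x ≥ (1/2)(1 + 1/(e^{|1/3−a|} − 1))^{(1+a)/(2a)}`. -/
theorem stmt_15 (a x : ℝ) (ha0 : 0 < a) (ha1 : a < 1) (hne : a ≠ 1/3)
    (psi0 : ℝ → ℝ)
    (hpsi0 : ∀ t, La a ≤ t → Ma a ≤ psi0 t ∧ fab a (psi0 t) = t)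
    (hx : (1/2) * (1 + 1 / (Real.exp |1/3 - a| - 1)) ^ ((1 + a) / (2 * a)) ≤ x) :
    (a < 1/3 →
      (1/(1+a)) * (2*x) ^ (-(2*a)/(1+a)) + Real.log (2*x) / (1+a) ≤ psi0 x ∧
      psi0 x ≤ Real.log (2*x) / (1+a) + (2/(1+a)) * (2*x) ^ (-(2*a)/(1+a))) ∧
    (1/3 < a →
      (1/(3*(1+a))) * (2*x) ^ (-(2*a)/(1+a)) + Real.log (2*x) / (1+a) ≤ psi0 x ∧
      psi0 x ≤ Real.log (2*x) / (1+a) + (1/(1+a)) * (2*x) ^ (-(2*a)/(1+a))) := by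
  have h1a : 0 < 1 + a := by linarith
  have hδ : 0 < |1/3 - a| := abs_pos.2 (sub_ne_zero.2 (Ne.symm hne))
  set B := 1 + 1 / (exp |1/3 - a| - 1)
  have hB : 1 ≤ B := le_add_of_nonneg_right (one_div_nonneg.2 (sub_nonneg.2 (one_le_exp hδ.le)))
  have h2x : 1 ≤ 2 * x := by
    have := one_le_rpow hB (by positivity : 0 ≤ (1 + a) / (2 * a))
    linarith
  have hx0 : 0 < x := by linarith
  set y := (2 * x) ^ (-(2 * a) / (1 + a)) with hy
  have hy0 : 0 < y := by positivity
  have hyδ : y ≤ |1/3 - a| := by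
    have hBx : B ≤ (2 * x) ^ (2 * a / (1 + a)) :=
      (rpow_inv_le_iff_of_pos (by linarith) (by linarith) (by positivity)).1
        (by rw [inv_div]; linarith)
    calc y = ((2 * x) ^ (2 * a / (1 + a)))⁻¹ := by rw [hy, neg_div, rpow_neg (by linarith)]
      _ ≤ B⁻¹ := inv_anti₀ (by linarith) hBx
      _ ≤ |1/3 - a| := inv_one_add_one_div_exp_sub_one_le hδ
  obtain ⟨hM, hfx⟩ := hpsi0 x ((La_nonpos ha0 ha1).trans hx0.le)
  have hmem : ∀ u, 0 ≤ u → (log (2 * x) + u) / (1 + a) ∈ Ici (Ma a) := fun u hu =>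
    (Ma_nonpos ha0 ha1).trans (div_nonneg (add_nonneg (log_nonneg h2x) hu) h1a.le)
  have lower : ∀ u, 0 ≤ u → exp u - 1 ≤ y * exp ((1 - a) / (1 + a) * u) →
      (log (2 * x) + u) / (1 + a) ≤ psi0 x := fun u hu h =>
    ((fab_strictMonoOn ha0 ha1).le_iff_le (hmem u hu) hM).1 <| by
      rw [hfx, fab_log_add_div a x u h1a.ne' hx0]
      exact mul_le_of_le_one_right hx0.le (by linarith)
  have upper : ∀ u, 0 ≤ u → y * exp ((1 - a) / (1 + a) * u) ≤ exp u - 1 →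
      psi0 x ≤ (log (2 * x) + u) / (1 + a) := fun u hu h =>
    ((fab_strictMonoOn ha0 ha1).le_iff_le hM (hmem u hu)).1 <| by
      rw [hfx, fab_log_add_div a x u h1a.ne' hx0]
      exact le_mul_of_one_le_right hx0.le (by linarith)
  refine ⟨fun ha => ⟨?_, ?_⟩, fun ha => ⟨?_, ?_⟩⟩
  · rw [abs_of_pos (by linarith)] at hyδ
    convert lower y hy0.le (exp_sub_one_le_mul_exp_mul hy0.le (by linarith) ?_) using 1
    · ring
    · rw [le_div_iff₀ h1a]; nlinarith
  · rw [abs_of_pos (by linarith)] at hyδ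
    have hc : (1 - a) / (1 + a) ≤ 1 := (div_le_one h1a).2 (by linarith)
    convert upper (2 * y) (by positivity)
      (mul_exp_mul_two_mul_le_exp_two_mul_sub_one hy0.le (by nlinarith [log_two_gt_d9])) using 1
    ring
  · rw [abs_of_neg (by linarith)] at hyδ
    convert lower (y / 3) (by positivity)
      (exp_div_three_sub_one_le_mul_exp_mul hy0.le (by linarith) (by bound)) using 1
    field_simp
    ring
  · convert upper y hy0.le (mul_exp_mul_le_exp_sub_one hy0.le ?_) using 1
    · ring
    · rw [div_le_iff₀ h1a]; linarith
end
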